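/- Let ψ(x) := Σ_{n=1}^{∞} exp(−n²·π·x) for x > 0. For every q ∈ ℂ with −1/2 < Re q < 1/2: π^{−q/2−1/4}·Γ(q/2 + 1/4)·ζ(q + 1/2) = ∫_{−∞}^{∞} (−exp(−|t|/2) + 2·exp(|t|/2)·ψ(exp(2|t|)))·exp(−t·q) dt, the integral being absolutely convergent on this strip. (Formula (7) of the paper's Example 3.26.3, the two-sided Laplace representation of the completed zeta function centred at the critical line.) -/

import Mathlib

/-!
Put `s = q + 1/2`. Mathlib's `completedRiemannZeta₀ s` is half the Mellin transform at `s/2` of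
the modified theta kernel `f_modif`, which equals `θ(x) - 1 = 2ψ(x)` for `x > 1` and
`θ(x) - x^{-1/2}` for `x < 1`. Substituting `x = e^{-2t}` and using `θ(1/x) = √x θ(x)` on the
half `t > 0`, the Mellin integrand becomes `2 e^{|t|/2} ψ(e^{2|t|}) e^{-tq}` on the whole
line, so `Λ₀(s)` is the `ψ`-part of the integral, for every `q`. On the strip `|Re q| < 1/2`
the remaining term `-e^{-|t|/2}` integrates to `-1/s - 1/(1-s)`, exactly the pole terms with
`Λ(s) = Λ₀(s) - 1/s - 1/(1-s)`.
-/

open MeasureTheory Set Complex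

/-- The Jacobi theta-type series `ψ(x) = Σ_{n≥1} exp(−n²πx)`. -/
noncomputable def jacobiPsi (x : ℝ) : ℝ :=
  ∑' n : ℕ, Real.exp (-((n : ℝ) + 1) ^ 2 * Real.pi * x)

open HurwitzZeta

lemma ofReal_exp_cpow (u : ℝ) (s : ℂ) : (Real.exp u : ℂ) ^ s = cexp (s * u) := by
  rw [cpow_def_of_ne_zero (ofReal_ne_zero.mpr (Real.exp_pos u).ne'),
    ← ofReal_log (Real.exp_pos u).le, Real.log_exp, mul_comm]

section MellinExp

variable {E : Type*} [NormedAddCommGroup E] [NormedSpace ℂ E]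

lemma abs_exp_smul_cpow_smul (f : ℝ → E) (s : ℂ) (u : ℝ) :
    |Real.exp u| • (Real.exp u : ℂ) ^ (s - 1) • f (Real.exp u) =
      cexp (s * u) • f (Real.exp u) := by
  rw [abs_of_pos (Real.exp_pos u), RCLike.real_smul_eq_coe_smul (K := ℂ), smul_smul,
    ofReal_exp_cpow]
  congr 1
  rw [RCLike.ofReal_eq_complex_ofReal, ofReal_exp, ← Complex.exp_add]
  ring_nf

theorem mellin_eq_integral_comp_exp (f : ℝ → E) (s : ℂ) :
    mellin f s = ∫ u : ℝ, cexp (s * u) • f (Real.exp u) := by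
  rw [mellin, ← Real.range_exp, ← image_univ, integral_image_eq_integral_abs_deriv_smul
    MeasurableSet.univ (fun u _ => (Real.hasDerivAt_exp u).hasDerivWithinAt)
    Real.exp_injective.injOn, setIntegral_univ]
  simp_rw [abs_exp_smul_cpow_smul]

theorem mellinConvergent_iff_integrable_comp_exp {f : ℝ → E} {s : ℂ} :
    MellinConvergent f s ↔ Integrable (fun u : ℝ => cexp (s * u) • f (Real.exp u)) := by
  rw [MellinConvergent, ← Real.range_exp, ← image_univ,
    integrableOn_image_iff_integrableOn_abs_deriv_smul MeasurableSet.univ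
      (fun u _ => (Real.hasDerivAt_exp u).hasDerivWithinAt) Real.exp_injective.injOn,
    integrableOn_univ]
  simp_rw [abs_exp_smul_cpow_smul]

end MellinExp

section LaplaceExpNegAbs

variable (α : ℝ) (q : ℂ)

lemma exp_neg_mul_abs_mul_cexp_eqOn_Iic :
    EqOn (fun t : ℝ => ↑(Real.exp (-(α * |t|))) * cexp (-(t * q)))
      (fun t : ℝ => cexp ((α - q) * t)) (Iic 0) := fun t (ht : t ≤ 0) => by
  beta_reduce
  rw [abs_of_nonpos ht, ofReal_exp, ← Complex.exp_add]
  push_cast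
  ring_nf

lemma exp_neg_mul_abs_mul_cexp_eqOn_Ioi :
    EqOn (fun t : ℝ => ↑(Real.exp (-(α * |t|))) * cexp (-(t * q)))
      (fun t : ℝ => cexp (-(α + q) * t)) (Ioi 0) := fun t (ht : 0 < t) => by
  beta_reduce
  rw [abs_of_pos ht, ofReal_exp, ← Complex.exp_add]
  push_cast
  ring_nf

variable {α q}

theorem integrable_exp_neg_mul_abs_mul_cexp (h₀ : -α < q.re) (h₁ : q.re < α) :
    Integrable (fun t : ℝ => ↑(Real.exp (-(α * |t|))) * cexp (-(t * q))) := by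
  rw [← integrableOn_univ, ← Iic_union_Ioi (a := 0), integrableOn_union]
  exact ⟨(integrableOn_exp_mul_complex_Iic (by simp; linarith) 0).congr_fun
      (exp_neg_mul_abs_mul_cexp_eqOn_Iic α q).symm measurableSet_Iic,
    (integrableOn_exp_mul_complex_Ioi (by simp; linarith) 0).congr_fun
      (exp_neg_mul_abs_mul_cexp_eqOn_Ioi α q).symm measurableSet_Ioi⟩

theorem integral_exp_neg_mul_abs_mul_cexp (h₀ : -α < q.re) (h₁ : q.re < α) :
    ∫ t : ℝ, ↑(Real.exp (-(α * |t|))) * cexp (-(t * q)) = 1 / (α + q) + 1 / (α - q) := by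
  have hf := integrable_exp_neg_mul_abs_mul_cexp h₀ h₁
  rw [← intervalIntegral.integral_Iic_add_Ioi hf.integrableOn hf.integrableOn,
    setIntegral_congr_fun measurableSet_Iic (exp_neg_mul_abs_mul_cexp_eqOn_Iic α q),
    setIntegral_congr_fun measurableSet_Ioi (exp_neg_mul_abs_mul_cexp_eqOn_Ioi α q),
    integral_exp_mul_complex_Iic (by simp; linarith) 0,
    integral_exp_mul_complex_Ioi (by simp; linarith) 0,
    ofReal_zero, mul_zero, mul_zero, Complex.exp_zero, neg_div_neg_eq]
  ring

end LaplaceExpNegAbs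

lemma evenKernel_zero_eq_one_add_two_mul_jacobiPsi {x : ℝ} (hx : 0 < x) :
    evenKernel 0 x = 1 + 2 * jacobiPsi x := by
  have hθ : jacobiTheta (I * x) = evenKernel 0 x := by
    simpa [jacobiTheta_eq_jacobiTheta₂] using (evenKernel_def 0 x).symm
  have hψ : (jacobiPsi x : ℂ) =
      ∑' n : ℕ, cexp (Real.pi * I * ((n : ℂ) + 1) ^ 2 * (I * x)) := by
    rw [jacobiPsi, ofReal_tsum]
    congr 1 with n
    push_cast
    congr 1
    linear_combination (-((n : ℂ) + 1) ^ 2 * Real.pi * x) * I_sq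
  apply ofReal_injective
  rw [← hθ]
  push_cast
  rw [hψ, (hasSum_nat_jacobiTheta (by simpa using hx)).tsum_eq]
  ring

lemma hurwitzEvenFEPair_zero_f_modif_of_one_lt {x : ℝ} (hx : 1 < x) :
    (hurwitzEvenFEPair 0).f_modif x = 2 * jacobiPsi x := by
  simp [WeakFEPair.f_modif, hurwitzEvenFEPair, hx, not_lt.mpr hx.le,
    evenKernel_zero_eq_one_add_two_mul_jacobiPsi (zero_lt_one.trans hx)]

lemma hurwitzEvenFEPair_zero_f_modif_one_div {x : ℝ} (hx : 0 < x) :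
    (hurwitzEvenFEPair 0).f_modif (1 / x) =
      (x ^ (1 / 2 : ℝ) : ℝ) * (hurwitzEvenFEPair 0).f_modif x := by
  have h := (hurwitzEvenFEPair 0).hf_modif_FE x hx
  have hg : (hurwitzEvenFEPair 0).g_modif = (hurwitzEvenFEPair 0).symm.f_modif := rfl
  rw [hg, hurwitzEvenFEPair_zero_symm] at h
  simpa [hurwitzEvenFEPair] using h

lemma hurwitzEvenFEPair_zero_mellin_integrand_exp_neg_two_mul (q : ℂ) {t : ℝ} (ht : t ≠ 0) :
    cexp ((q / 2 + 1 / 4) * ↑(-2 * t)) • (hurwitzEvenFEPair 0).f_modif (Real.exp (-2 * t)) =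
      ↑(2 * Real.exp (|t| / 2) * jacobiPsi (Real.exp (2 * |t|))) * cexp (-(t * q)) := by
  rcases ht.lt_or_gt with ht | ht
  · have hx : 1 < Real.exp (-2 * t) := Real.one_lt_exp_iff.mpr (by linarith)
    rw [hurwitzEvenFEPair_zero_f_modif_of_one_lt hx, abs_of_neg ht, smul_eq_mul]
    have hexp : cexp ((q / 2 + 1 / 4) * ↑(-2 * t)) = cexp ↑(-t / 2) * cexp (-(t * q)) := by
      rw [← Complex.exp_add]; push_cast; ring_nf
    rw [hexp, show 2 * -t = -2 * t by ring]
    push_cast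
    ring
  · have hx : 1 < Real.exp (2 * t) := Real.one_lt_exp_iff.mpr (by linarith)
    rw [show Real.exp (-2 * t) = 1 / Real.exp (2 * t) by rw [one_div, ← Real.exp_neg]; ring_nf,
      hurwitzEvenFEPair_zero_f_modif_one_div (Real.exp_pos _),
      hurwitzEvenFEPair_zero_f_modif_of_one_lt hx, abs_of_pos ht, smul_eq_mul, ← Real.exp_mul]
    have hexp : cexp ((q / 2 + 1 / 4) * ↑(-2 * t)) * cexp ↑(2 * t * (1 / 2))
        = cexp ↑(t / 2) * cexp (-(t * q)) := by
      rw [← Complex.exp_add, ← Complex.exp_add]; push_cast; ring_nf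
    rw [← mul_assoc, ofReal_exp, hexp]
    push_cast
    ring

theorem integrable_jacobiPsi_two_sided_laplace (q : ℂ) :
    Integrable (fun t : ℝ =>
      ↑(2 * Real.exp (|t| / 2) * jacobiPsi (Real.exp (2 * |t|))) * cexp (-(t * q))) := by
  have hconv :=
    ((hurwitzEvenFEPair 0).isStrongFEPair_toStrongFEPair.hasMellin (q / 2 + 1 / 4)).1
  refine ((mellinConvergent_iff_integrable_comp_exp.mp hconv).comp_mul_left'
    (R := -2) (by norm_num)).congr ?_
  filter_upwards [Measure.ae_ne volume 0] with t ht
  exact hurwitzEvenFEPair_zero_mellin_integrand_exp_neg_two_mul q ht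

theorem completedRiemannZeta₀_add_half_eq_integral (q : ℂ) :
    completedRiemannZeta₀ (q + 1 / 2) =
      ∫ t : ℝ,
        ↑(2 * Real.exp (|t| / 2) * jacobiPsi (Real.exp (2 * |t|))) * cexp (-(t * q)) := by
  have hsubst := Measure.integral_comp_mul_left (fun u : ℝ =>
    cexp ((q / 2 + 1 / 4) * u) • (hurwitzEvenFEPair 0).f_modif (Real.exp u)) (-2)
  rw [← mellin_eq_integral_comp_exp] at hsubst
  have hΛ₀ : completedRiemannZeta₀ (q + 1 / 2) =
      mellin (hurwitzEvenFEPair 0).f_modif (q / 2 + 1 / 4) / 2 := by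
    rw [show q / 2 + 1 / 4 = (q + 1 / 2) / 2 by ring]; rfl
  rw [hΛ₀, ← integral_congr_ae (Measure.ae_ne volume 0 |>.mono fun t ht =>
    hurwitzEvenFEPair_zero_mellin_integrand_exp_neg_two_mul q ht), hsubst]
  norm_num [div_eq_inv_mul]

theorem completed_zeta_two_sided_laplace (q : ℂ)
    (h₀ : -(1 / 2) < q.re) (h₁ : q.re < 1 / 2) :
    Integrable (fun t : ℝ =>
      ((-Real.exp (-|t| / 2)
          + 2 * Real.exp (|t| / 2) * jacobiPsi (Real.exp (2 * |t|)) : ℝ) : ℂ)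
        * Complex.exp (-(t * q))) ∧
    (Real.pi : ℂ) ^ (-q / 2 - 1 / 4) * Complex.Gamma (q / 2 + 1 / 4)
        * riemannZeta (q + 1 / 2) =
      ∫ t : ℝ,
        ((-Real.exp (-|t| / 2)
            + 2 * Real.exp (|t| / 2) * jacobiPsi (Real.exp (2 * |t|)) : ℝ) : ℂ)
          * Complex.exp (-(t * q)) := by
  have hexp := integrable_exp_neg_mul_abs_mul_cexp (α := 1 / 2) h₀ h₁
  have hψ := integrable_jacobiPsi_two_sided_laplace q
  have hsplit : (fun t : ℝ => ((-Real.exp (-|t| / 2)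
        + 2 * Real.exp (|t| / 2) * jacobiPsi (Real.exp (2 * |t|)) : ℝ) : ℂ) * cexp (-(t * q)))
      = fun t : ℝ => -(↑(Real.exp (-(1 / 2 * |t|))) * cexp (-(t * q)))
        + ↑(2 * Real.exp (|t| / 2) * jacobiPsi (Real.exp (2 * |t|))) * cexp (-(t * q)) := by
    funext t
    rw [show -|t| / 2 = -(1 / 2 * |t|) by ring]
    push_cast
    ring
  have hs : 0 < (q + 1 / 2).re := by simp; linarith
  have hΓ : (Real.pi : ℂ) ^ (-q / 2 - 1 / 4) * Complex.Gamma (q / 2 + 1 / 4) =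
      Gammaℝ (q + 1 / 2) := by
    rw [Gammaℝ_def]; ring_nf
  rw [hsplit, integral_add hexp.fun_neg hψ, integral_neg,
    integral_exp_neg_mul_abs_mul_cexp h₀ h₁,
    ← completedRiemannZeta₀_add_half_eq_integral, hΓ,
    riemannZeta_def_of_ne_zero (fun h => hs.ne' (by rw [h, zero_re])),
    mul_div_cancel₀ _ (Gammaℝ_ne_zero_of_re_pos hs), completedRiemannZeta_eq]
  refine ⟨hexp.fun_neg.add hψ, ?_⟩
  push_cast
  ring
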